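/- arXiv:2204.03505 — 5 statements merged into one kernel-verified Lean document; each statement's English description precedes it below -/
import Mathlib

section
/- Fix an integer μ ≥ 1, a real λ > 0, and scores z : Fin μ → ℝ. The point ỹ : Fin μ → ℝ defined by ỹ_r = ((1 + μλ)·z_r + Σ_{r' ≠ r} z_{r'}) / (μ(1 + λ)) is the unique global minimizer of f over all of Fin μ → ℝ: for every y : Fin μ → ℝ with y ≠ ỹ one has f(ỹ) < f(y). -/
/-!
The objective is a quadratic whose stationarity equation
`(ỹ_r - mean ỹ) + λ (ỹ_r - z_r) = 0` forces `mean ỹ = mean z`, so it is solved by the given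
`ỹ_r = (λ z_r + mean z) / (1 + λ)`. Around a stationary point the objective grows by exactly
`Σ (d_r - mean d)² + λ Σ d_r²` with `d = y - ỹ`, which is positive for `d ≠ 0` as `λ > 0`.
-/

open Finset

namespace CenteredRidge

variable {ι : Type*} [Fintype ι]

noncomputable def mean (y : ι → ℝ) : ℝ := (1 / (Fintype.card ι : ℝ)) * ∑ r, y r

noncomputable def objective (lam : ℝ) (z y : ι → ℝ) : ℝ :=
  ∑ r, (y r - mean y) ^ 2 + lam * ∑ r, (y r - z r) ^ 2

theorem mean_add (y d : ι → ℝ) : mean (y + d) = mean y + mean d := by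
  simp only [mean, Pi.add_apply, sum_add_distrib, mul_add]

theorem sum_sub_mean (y : ι → ℝ) : ∑ r, (y r - mean y) = 0 := by
  rcases isEmpty_or_nonempty ι with hι | hι
  · simp
  · rw [sum_sub_distrib, sum_const, card_univ, nsmul_eq_mul, mean]
    field_simp
    ring

theorem objective_eq_sum (lam : ℝ) (z y : ι → ℝ) :
    objective lam z y = ∑ r, ((y r - mean y) ^ 2 + lam * (y r - z r) ^ 2) := by
  rw [objective, sum_add_distrib, mul_sum]

/-- The linear term of the expansion vanishes because `ytil` is stationary and centered
deviations sum to zero. -/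
theorem objective_eq_add_of_stationary {lam : ℝ} {z ytil : ι → ℝ}
    (hstat : ∀ r, ytil r - mean ytil + lam * (ytil r - z r) = 0) (y : ι → ℝ) :
    objective lam z y = objective lam z ytil + objective lam 0 (y - ytil) := by
  set d := y - ytil
  have hmean : mean y = mean ytil + mean d := by
    rw [← mean_add, add_sub_cancel]
  have hterm : ∀ r, (y r - mean y) ^ 2 + lam * (y r - z r) ^ 2 =
      ((ytil r - mean ytil) ^ 2 + lam * (ytil r - z r) ^ 2)
        + ((d r - mean d) ^ 2 + lam * (d r - 0) ^ 2)
        - 2 * mean d * (ytil r - mean ytil) := by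
    intro r
    have hy : y r = ytil r + d r := by simp [d]
    rw [hmean, hy]
    linear_combination 2 * d r * hstat r
  simp only [objective_eq_sum, Pi.zero_apply] at *
  rw [sum_congr rfl fun r _ => hterm r, sum_sub_distrib, ← mul_sum, sum_sub_mean,
    mul_zero, sub_zero, sum_add_distrib]

theorem objective_zero_pos {lam : ℝ} (hlam : 0 < lam) {d : ι → ℝ} (hd : d ≠ 0) :
    0 < objective lam 0 d := by
  obtain ⟨r, hr⟩ := Function.ne_iff.mp hd
  have hvar : 0 ≤ ∑ r, (d r - mean d) ^ 2 := sum_nonneg fun r _ => sq_nonneg _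
  have hnorm : 0 < ∑ r, (d r - 0) ^ 2 :=
    sum_pos' (fun r _ => sq_nonneg _) ⟨r, mem_univ r, pow_two_pos_of_ne_zero (sub_ne_zero.2 hr)⟩
  rw [objective]
  positivity

theorem stationary_of_eq {lam : ℝ} (hlam : 1 + lam ≠ 0) {z ytil : ι → ℝ}
    (h : ∀ r, ytil r = (lam * z r + mean z) / (1 + lam)) (r : ι) :
    ytil r - mean ytil + lam * (ytil r - z r) = 0 := by
  have : Nonempty ι := ⟨r⟩
  have hmean : mean ytil = mean z := by
    have hcard : (Fintype.card ι : ℝ) ≠ 0 := Nat.cast_ne_zero.2 Fintype.card_ne_zero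
    simp only [mean, h, ← sum_div, sum_add_distrib, ← mul_sum, sum_const, card_univ,
      nsmul_eq_mul]
    field_simp
    ring
  rw [hmean, h r]
  field_simp
  ring

end CenteredRidge

open CenteredRidge in
theorem stmt_1_general (μ : ℕ) (lam : ℝ) (hlam : 0 < lam) (z : Fin μ → ℝ)
    (f : (Fin μ → ℝ) → ℝ)
    (hf : ∀ y : Fin μ → ℝ,
      f y = ∑ r, (y r - (1 / (μ : ℝ)) * ∑ r', y r') ^ 2
        + lam * ∑ r, (y r - z r) ^ 2)
    (ytil : Fin μ → ℝ)
    (hytil : ∀ r, ytil r =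
      ((1 + (μ : ℝ) * lam) * z r + ∑ r' ∈ Finset.univ.erase r, z r') / ((μ : ℝ) * (1 + lam))) :
    ∀ y : Fin μ → ℝ, y ≠ ytil → f ytil < f y := by
  intro y hy
  have hf' : f = objective lam z := funext fun y => by simp [hf, objective, mean]
  have hytil' : ∀ r, ytil r = (lam * z r + mean z) / (1 + lam) := by
    intro r
    have hμ : (μ : ℝ) ≠ 0 := Nat.cast_ne_zero.2 (Fin.pos r).ne'
    rw [hytil r, sum_erase_eq_sub (mem_univ r), mean, Fintype.card_fin]
    field_simp
    ring
  have hstat := stationary_of_eq (by linarith) hytil'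
  rw [hf', objective_eq_add_of_stationary hstat y]
  exact lt_add_of_pos_right _ (objective_zero_pos hlam (sub_ne_zero.2 hy))

/-- The point `ytil` is the unique global minimizer of the per-paper objective `f`
over all of `Fin μ → ℝ` (unconstrained stationary-point computation in the proof of
Proposition 2). -/
theorem stmt_1 (μ : ℕ) (hμ : 1 ≤ μ) (lam : ℝ) (hlam : 0 < lam) (z : Fin μ → ℝ)
    (f : (Fin μ → ℝ) → ℝ)
    (hf : ∀ y : Fin μ → ℝ,
      f y = ∑ r, (y r - (1 / (μ : ℝ)) * ∑ r', y r') ^ 2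
        + lam * ∑ r, (y r - z r) ^ 2)
    (ytil : Fin μ → ℝ)
    (hytil : ∀ r, ytil r =
      ((1 + (μ : ℝ) * lam) * z r + ∑ r' ∈ Finset.univ.erase r, z r') / ((μ : ℝ) * (1 + lam))) :
    ∀ y : Fin μ → ℝ, y ≠ ytil → f ytil < f y :=
  stmt_1_general μ lam hlam z f hf ytil hytil
end

section
/- Let A be a nonempty finite type, pap : A → P as in the setup, z : A → ℝ, and λ > 0. Then the objective F : (A → ℝ) → ℝ given by F(y) = C(y) + λ Σ_{a ∈ A} (y_a − z_a)² is strictly convex on A → ℝ (StrictConvexOn ℝ over the whole space). -/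
open Finset

lemma sq_combo_le {a b u v : ℝ} (ha : 0 ≤ a) (hb : 0 ≤ b) (hab : a + b = 1) :
    (a * u + b * v) ^ 2 ≤ a * u ^ 2 + b * v ^ 2 := by nlinarith [sq_nonneg (u - v), mul_nonneg ha hb]

lemma sq_combo_lt {a b u v : ℝ} (ha : 0 < a) (hb : 0 < b) (hab : a + b = 1) (huv : u ≠ v) :
    (a * u + b * v) ^ 2 < a * u ^ 2 + b * v ^ 2 := by
  have h : (u - v) ^ 2 > 0 := pow_pos (abs_pos.mpr (sub_ne_zero.mpr huv)) 2 |>.trans_le (by rw [sq_abs])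
  nlinarith [mul_pos ha hb]

lemma strict_g {A : Type*} [Fintype A] (z : A → ℝ) :
    StrictConvexOn ℝ Set.univ (fun y : A → ℝ => ∑ a, (y a - z a) ^ 2) := by
  refine ⟨convex_univ, fun x _ y _ hxy a b ha hb hab => ?_⟩
  rw [Finset.smul_sum, Finset.smul_sum, ← Finset.sum_add_distrib]
  have hne : ∃ i ∈ Finset.univ, x i ≠ y i := by
    by_contra h
    push_neg at h
    exact hxy (funext fun i => h i (Finset.mem_univ i))
  obtain ⟨i, _, hi⟩ := hne
  apply Finset.sum_lt_sum
  · intro j _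
    have : (a • x + b • y) j - z j = a * (x j - z j) + b * (y j - z j) := by
      simp only [Pi.add_apply, Pi.smul_apply, smul_eq_mul]
      linear_combination z j * hab
    rw [this]
    simpa [smul_eq_mul] using sq_combo_le ha.le hb.le hab
  · refine ⟨i, Finset.mem_univ i, ?_⟩
    have : (a • x + b • y) i - z i = a * (x i - z i) + b * (y i - z i) := by
      simp only [Pi.add_apply, Pi.smul_apply, smul_eq_mul]
      linear_combination z i * hab
    rw [this]
    have : x i - z i ≠ y i - z i := fun h => hi (by linarith [sub_left_inj.mp h])
    simpa [smul_eq_mul] using sq_combo_lt ha hb hab this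

/-- For λ > 0, the algorithm's objective `F(y) = C(y) + λ Σ_a (y_a − z_a)²` is strictly
convex on `A → ℝ`. -/
theorem stmt_8 {A P : Type*} [Fintype A] [Nonempty A] [Fintype P] [DecidableEq P]
    (pap : A → P) (hsurj : ∀ p : P, ∃ a : A, pap a = p)
    (C : (A → ℝ) → ℝ)
    (hC : ∀ y : A → ℝ,
      C y = ∑ a, (y a -
        (∑ a' ∈ Finset.univ.filter (fun a' => pap a' = pap a), y a') /
          ((Finset.univ.filter (fun a' => pap a' = pap a)).card : ℝ)) ^ 2)
    (z : A → ℝ) (lam : ℝ) (hlam : 0 < lam)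
    (F : (A → ℝ) → ℝ)
    (hF : ∀ y : A → ℝ, F y = C y + lam * ∑ a, (y a - z a) ^ 2) :
    StrictConvexOn ℝ Set.univ F := by
  have hFeq : F = fun y => C y + lam * ∑ a, (y a - z a) ^ 2 := funext hF
  rw [hFeq]
  have hCconv : ConvexOn ℝ Set.univ C := by
    refine ⟨convex_univ, fun x _ y _ a b ha hb hab => ?_⟩
    rw [hC, hC, hC]
    rw [Finset.smul_sum, Finset.smul_sum, ← Finset.sum_add_distrib]
    apply Finset.sum_le_sum
    intro j _
    set s := Finset.univ.filter (fun a' => pap a' = pap j)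
    have hlin : (a • x + b • y) j - (∑ a' ∈ s, (a • x + b • y) a') / (s.card : ℝ)
        = a * (x j - (∑ a' ∈ s, x a') / (s.card : ℝ)) + b * (y j - (∑ a' ∈ s, y a') / (s.card : ℝ)) := by
      simp only [Pi.add_apply, Pi.smul_apply, smul_eq_mul]
      rw [Finset.sum_add_distrib, ← Finset.mul_sum, ← Finset.mul_sum, add_div]
      ring
    rw [hlin]
    simpa [smul_eq_mul] using sq_combo_le ha hb hab
  have hg : StrictConvexOn ℝ Set.univ (fun y : A → ℝ => lam * ∑ a, (y a - z a) ^ 2) := by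
    refine ⟨convex_univ, fun x hx y hy hxy a b ha hb hab => ?_⟩
    have h := (strict_g z).2 hx hy hxy ha hb hab
    simp only [smul_eq_mul] at h ⊢
    nlinarith
  exact hCconv.add_strictConvexOn hg
end

section
/- Let A be a nonempty finite type, pap : A → P as in the setup, z : A → ℝ, λ > 0, and let S be any convex subset of A → ℝ. If y₁ ∈ S and y₂ ∈ S both minimize F over S (i.e., F(y₁) ≤ F(y) and F(y₂) ≤ F(y) for all y ∈ S), then y₁ = y₂. -/
open Finset

/-- Uniqueness of the minimizer of the strictly convex objective `F` over any convex
constraint set `S`: two minimizers of `F` over `S` must coincide. -/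
theorem stmt_9 {A P : Type*} [Fintype A] [Nonempty A] [Fintype P] [DecidableEq P]
    (pap : A → P) (hsurj : ∀ p : P, ∃ a : A, pap a = p)
    (C : (A → ℝ) → ℝ)
    (hC : ∀ y : A → ℝ,
      C y = ∑ a, (y a -
        (∑ a' ∈ Finset.univ.filter (fun a' => pap a' = pap a), y a') /
          ((Finset.univ.filter (fun a' => pap a' = pap a)).card : ℝ)) ^ 2)
    (z : A → ℝ) (lam : ℝ) (hlam : 0 < lam)
    (F : (A → ℝ) → ℝ)
    (hF : ∀ y : A → ℝ, F y = C y + lam * ∑ a, (y a - z a) ^ 2)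
    (S : Set (A → ℝ)) (hS : Convex ℝ S)
    (y₁ y₂ : A → ℝ) (hy₁ : y₁ ∈ S) (hy₂ : y₂ ∈ S)
    (hmin₁ : ∀ y ∈ S, F y₁ ≤ F y) (hmin₂ : ∀ y ∈ S, F y₂ ≤ F y) :
    y₁ = y₂ := by
  by_contra hne
  set m : A → ℝ := fun a => (y₁ a + y₂ a) / 2 with hm
  have hmS : m ∈ S := by
    have h := hS hy₁ hy₂ (by norm_num : (0:ℝ) ≤ 1/2) (by norm_num : (0:ℝ) ≤ 1/2)
      (by norm_num : (1:ℝ)/2 + 1/2 = 1)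
    convert h using 1
    funext a
    simp [hm, Pi.add_apply, Pi.smul_apply, smul_eq_mul]
    ring
  have hsum : ∀ a : A, ∑ a' ∈ Finset.univ.filter (fun a' => pap a' = pap a), m a'
      = ((∑ a' ∈ Finset.univ.filter (fun a' => pap a' = pap a), y₁ a')
        + (∑ a' ∈ Finset.univ.filter (fun a' => pap a' = pap a), y₂ a')) / 2 := by
    intro a
    rw [← Finset.sum_add_distrib, ← Finset.sum_div]
  have hCm : C m ≤ (C y₁ + C y₂) / 2 := by
    rw [hC, hC, hC, ← Finset.sum_add_distrib, Finset.sum_div]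
    apply Finset.sum_le_sum
    intro a _
    rw [hsum a]
    set n : ℝ := ((Finset.univ.filter (fun a' => pap a' = pap a)).card : ℝ) with hn
    set s₁ : ℝ := ∑ a' ∈ Finset.univ.filter (fun a' => pap a' = pap a), y₁ a' with hs1
    set s₂ : ℝ := ∑ a' ∈ Finset.univ.filter (fun a' => pap a' = pap a), y₂ a' with hs2
    have hdiv : (s₁ + s₂) / 2 / n = (s₁ / n + s₂ / n) / 2 := by ring
    rw [hdiv]
    have hma : m a = (y₁ a + y₂ a) / 2 := rfl
    rw [hma]
    nlinarith [sq_nonneg ((y₁ a - s₁ / n) - (y₂ a - s₂ / n))]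
  have hL : ∑ a, (m a - z a) ^ 2
      = (∑ a, (y₁ a - z a) ^ 2 + ∑ a, (y₂ a - z a) ^ 2) / 2
        - (∑ a, (y₁ a - y₂ a) ^ 2) / 4 := by
    have hterm : ∀ a : A, (m a - z a) ^ 2
        = ((y₁ a - z a) ^ 2 + (y₂ a - z a) ^ 2) / 2 - (y₁ a - y₂ a) ^ 2 / 4 := by
      intro a
      have hma : m a = (y₁ a + y₂ a) / 2 := rfl
      rw [hma]; ring
    rw [Finset.sum_congr rfl (fun a _ => hterm a), Finset.sum_sub_distrib,
      ← Finset.sum_div, ← Finset.sum_div, Finset.sum_add_distrib]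
  have hD : 0 < ∑ a, (y₁ a - y₂ a) ^ 2 := by
    have hne' : ∃ a, y₁ a ≠ y₂ a := by
      by_contra h
      push_neg at h
      exact hne (funext h)
    obtain ⟨a, ha⟩ := hne'
    have hz : y₁ a - y₂ a ≠ 0 := sub_ne_zero.mpr ha
    have h1 : (0:ℝ) < (y₁ a - y₂ a) ^ 2 := by positivity
    have h2 := Finset.single_le_sum (f := fun a => (y₁ a - y₂ a) ^ 2)
      (fun i _ => sq_nonneg _) (Finset.mem_univ a)
    have h3 : (y₁ a - y₂ a) ^ 2 ≤ ∑ x, (y₁ x - y₂ x) ^ 2 := h2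
    linarith
  have h1 := hmin₁ m hmS
  have h2 := hmin₂ m hmS
  have hFm : F m ≤ (F y₁ + F y₂) / 2 - lam * (∑ a, (y₁ a - y₂ a) ^ 2) / 4 := by
    rw [hF m, hF y₁, hF y₂, hL]
    nlinarith [hCm]
  nlinarith [mul_pos hlam hD]
end

section
/- Let c ∈ ℝ, ε ≥ 0, and let m ≥ 1 be an integer. Define x̂ : Fin m → ℝ (1-indexed, position 1 being the highest-ranked paper in the bin) by x̂_i = c + ((m − i) − (m − 1)/2)·ε. Then x̂ satisfies the chain constraints x̂_i ≥ x̂_{i+1} + ε for all 1 ≤ i < m, and for every x : Fin m → ℝ satisfying x_i ≥ x_{i+1} + ε for all 1 ≤ i < m, one has Σ_{i=1}^m (x̂_i − c)² ≤ Σ_{i=1}^m (x_i − c)², with equality only when x = x̂. -/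
open Finset

private lemma sum_range_cast (n : ℕ) : ∑ i ∈ range n, (i : ℝ) = n * (n - 1) / 2 := by
  induction n with
  | zero => simp
  | succ k ih =>
    rw [Finset.sum_range_succ, ih]
    push_cast
    ring

/-- Within a quantization bin of `m` totally-ranked papers all receiving quantized score
`c`, the vector `x̂` with `x̂_i = c + ((m − i) − (m − 1)/2)·ε` (positions 1-indexed,
position 1 highest-ranked; here `i : Fin m` encodes position `i + 1`) satisfies the chain
constraints `x̂_i ≥ x̂_{i+1} + ε` and uniquely minimizes `Σ_i (x_i − c)²` among all `x`
satisfying those constraints. -/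
theorem stmt_12 (c ε : ℝ) (hε : 0 ≤ ε) (m : ℕ) (hm : 1 ≤ m)
    (xhat : Fin m → ℝ)
    (hxhat : ∀ i : Fin m,
      xhat i = c + (((m : ℝ) - (((i : ℕ) : ℝ) + 1)) - ((m : ℝ) - 1) / 2) * ε) :
    (∀ i : Fin m, ∀ h : (i : ℕ) + 1 < m, xhat i ≥ xhat ⟨(i : ℕ) + 1, h⟩ + ε) ∧
      ∀ x : Fin m → ℝ,
        (∀ i : Fin m, ∀ h : (i : ℕ) + 1 < m, x i ≥ x ⟨(i : ℕ) + 1, h⟩ + ε) →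
        (∑ i, (xhat i - c) ^ 2 ≤ ∑ i, (x i - c) ^ 2 ∧
          (∑ i, (xhat i - c) ^ 2 = ∑ i, (x i - c) ^ 2 → x = xhat)) := by
  have hm0 : (0:ℝ) < m := by exact_mod_cast Nat.lt_of_lt_of_le Nat.zero_lt_one hm
  set a : Fin m → ℝ := fun i => ((m : ℝ) - (((i : ℕ) : ℝ) + 1)) - ((m : ℝ) - 1) / 2 with ha
  have hxa : ∀ i, xhat i - c = a i * ε := by
    intro i; rw [hxhat i, ha]; ring
  have hstep : ∀ i : Fin m, ∀ h : (i : ℕ) + 1 < m,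
      xhat i = xhat ⟨(i : ℕ) + 1, h⟩ + ε := by
    intro i h
    rw [hxhat i, hxhat ⟨(i : ℕ) + 1, h⟩]
    push_cast
    ring
  have hchain : ∀ i : Fin m, ∀ h : (i : ℕ) + 1 < m, xhat i ≥ xhat ⟨(i : ℕ) + 1, h⟩ + ε := by
    intro i h; rw [hstep i h]
  -- sum of a is zero
  have hsa : ∑ i, a i = 0 := by
    rw [ha]
    rw [Fin.sum_univ_eq_sum_range (fun i => ((m : ℝ) - ((i : ℝ) + 1)) - ((m : ℝ) - 1) / 2)]
    have hrw : ∀ i : ℕ, (((m : ℝ) - ((i : ℝ) + 1)) - ((m : ℝ) - 1) / 2)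
        = ((m : ℝ) - 1 - ((m : ℝ) - 1) / 2) - (i : ℝ) := fun i => by ring
    simp_rw [hrw]
    rw [Finset.sum_sub_distrib, Finset.sum_const, Finset.card_range, sum_range_cast,
      nsmul_eq_mul]
    ring
  refine ⟨hchain, fun x hx => ?_⟩
  set z : Fin m → ℝ := fun i => x i - xhat i with hz
  -- z is antitone
  have zstep : ∀ i : Fin m, ∀ h : (i : ℕ) + 1 < m, z ⟨(i : ℕ) + 1, h⟩ ≤ z i := by
    intro i h
    have h1 := hx i h
    have h2 := hstep i h
    simp only [hz]
    linarith
  have zanti : ∀ (j i : ℕ) (hj : j < m) (hi : i < m), i ≤ j →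
      z ⟨j, hj⟩ ≤ z ⟨i, hi⟩ := by
    intro j
    induction j with
    | zero => intro i hj hi hij; interval_cases i; rfl
    | succ k ih =>
      intro i hj hi hij
      rcases Nat.eq_or_lt_of_le hij with rfl | hlt
      · rfl
      · have hk : k < m := Nat.lt_of_succ_lt hj
        calc z ⟨k + 1, hj⟩ ≤ z ⟨k, hk⟩ := zstep ⟨k, hk⟩ hj
          _ ≤ z ⟨i, hi⟩ := ih i hk hi (Nat.lt_succ_iff.mp hlt)
  have aanti : ∀ i j : Fin m, (j : ℕ) ≤ (i : ℕ) → a i ≤ a j := by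
    intro i j hij
    simp only [ha]
    have : ((j : ℕ) : ℝ) ≤ ((i : ℕ) : ℝ) := by exact_mod_cast hij
    linarith
  have hmono : Monovary a z := by
    intro i j hzij
    rcases le_total (i : ℕ) (j : ℕ) with h | h
    · exfalso
      have := zanti j i j.isLt i.isLt h
      simp at this
      linarith
    · exact aanti i j h
  have cheb := hmono.sum_mul_sum_le_card_mul_sum
  rw [hsa, zero_mul] at cheb
  have hcard : (Fintype.card (Fin m) : ℝ) = (m : ℝ) := by simp
  rw [hcard] at cheb
  have haz : 0 ≤ ∑ i, a i * z i := nonneg_of_mul_nonneg_right cheb hm0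
  -- key identity
  have key : ∑ i, (x i - c) ^ 2
      = ∑ i, (xhat i - c) ^ 2 + 2 * ε * (∑ i, a i * z i) + ∑ i, z i ^ 2 := by
    have h1 : ∀ i : Fin m, (x i - c) ^ 2
        = (xhat i - c) ^ 2 + 2 * ε * (a i * z i) + z i ^ 2 := by
      intro i
      have h2 : x i - c = a i * ε + z i := by
        have := hxa i; simp only [hz]; linarith
      rw [h2, hxa i]; ring
    rw [Finset.sum_congr rfl (fun i _ => h1 i), Finset.sum_add_distrib,
      Finset.sum_add_distrib, ← Finset.mul_sum]
  have hzsq : 0 ≤ ∑ i, z i ^ 2 := Finset.sum_nonneg (fun i _ => sq_nonneg _)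
  have hterm : 0 ≤ 2 * ε * (∑ i, a i * z i) := by positivity
  constructor
  · rw [key]; linarith
  · intro heq
    have hzero : ∑ i, z i ^ 2 = 0 := by
      rw [key] at heq; linarith
    have : ∀ i ∈ Finset.univ, z i ^ 2 = 0 :=
      (Finset.sum_eq_zero_iff_of_nonneg (fun i _ => sq_nonneg _)).mp hzero
    funext i
    have hi := this i (Finset.mem_univ i)
    have : z i = 0 := by nlinarith [sq_nonneg (z i)]
    simp only [hz] at this
    linarith
end

section
/- Let σ > 0, let A, pap, and C be as in the setup, let z : A → ℝ, and let B = {y : A → ℝ | ∀ a, z_a − 1/2 ≤ y_a ≤ z_a + 1/2} be the box of scores consistent with the quantized scores. Define M : (A → ℝ) → ℝ by M(y) = sup over x : P → ℝ of Σ_{a ∈ A} log( (1/(σ·√(2π))) · exp( −(y_a − x_{pap a})² / (2σ²) ) ). Then for y* ∈ B: y* minimizes C over B (i.e., C(y*) ≤ C(y) for all y ∈ B) if and only if y* maximizes M over B (i.e., M(y*) ≥ M(y) for all y ∈ B). -/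
open Finset

/-!
For fixed latent scores `y`, the Gaussian log-likelihood is, up to an additive constant, the
negative of `∑ a, (y a - x (pap a))² / (2σ²)`, and this sum of squares is minimized over `x` by
taking each `x p` to be the mean of `y` over the reviews of paper `p`. Hence the profile
log-likelihood is `M y = |A| log (1 / (σ √(2π))) - C y / (2σ²)`, a strictly decreasing function
of `C y`, so minimizers of `C` and maximizers of `M` coincide on every set of scores.
-/

theorem sum_sq_sub_eq_sum_sq_sub_mean_add {ι : Type*} (s : Finset ι) (y : ι → ℝ) (t : ℝ) :
    ∑ i ∈ s, (y i - t) ^ 2 =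
      ∑ i ∈ s, (y i - (∑ j ∈ s, y j) / #s) ^ 2 + #s * ((∑ j ∈ s, y j) / #s - t) ^ 2 := by
  rcases s.eq_empty_or_nonempty with rfl | hs
  · simp
  set m := (∑ j ∈ s, y j) / #s
  have hcard : (#s : ℝ) ≠ 0 := by exact_mod_cast hs.card_pos.ne'
  have hcentered : ∑ i ∈ s, (y i - m) = 0 := by
    rw [sum_sub_distrib, sum_const, nsmul_eq_mul, mul_div_cancel₀ _ hcard, sub_self]
  calc ∑ i ∈ s, (y i - t) ^ 2
      = ∑ i ∈ s, ((y i - m) ^ 2 + 2 * (m - t) * (y i - m) + (m - t) ^ 2) :=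
        sum_congr rfl fun _ _ => by ring
    _ = ∑ i ∈ s, (y i - m) ^ 2 + 2 * (m - t) * ∑ i ∈ s, (y i - m) + #s * (m - t) ^ 2 := by
        rw [sum_add_distrib, sum_add_distrib, ← mul_sum, sum_const, nsmul_eq_mul]
    _ = ∑ i ∈ s, (y i - m) ^ 2 + #s * (m - t) ^ 2 := by rw [hcentered, mul_zero, add_zero]

theorem sum_sq_sub_mean_le {ι : Type*} (s : Finset ι) (y : ι → ℝ) (t : ℝ) :
    ∑ i ∈ s, (y i - (∑ j ∈ s, y j) / #s) ^ 2 ≤ ∑ i ∈ s, (y i - t) ^ 2 := by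
  rw [sum_sq_sub_eq_sum_sq_sub_mean_add s y t]
  exact le_add_of_nonneg_right (by positivity)

noncomputable def fiberMean {A P : Type*} [Fintype A] [DecidableEq P] (pap : A → P)
    (y : A → ℝ) (p : P) : ℝ :=
  (∑ a ∈ univ.filter (fun a' => pap a' = p), y a) / #(univ.filter (fun a' => pap a' = p))

theorem sum_sq_sub_fiberMean_le {A P : Type*} [Fintype A] [DecidableEq P] (pap : A → P)
    (y : A → ℝ) (x : P → ℝ) :
    ∑ a, (y a - fiberMean pap y (pap a)) ^ 2 ≤ ∑ a, (y a - x (pap a)) ^ 2 := by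
  have hmaps : ∀ a ∈ univ, pap a ∈ univ.image pap := fun a ha => mem_image_of_mem pap ha
  rw [← sum_fiberwise_of_maps_to hmaps, ← sum_fiberwise_of_maps_to hmaps]
  refine sum_le_sum fun p _ => ?_
  have hfiber : ∀ f : P → ℝ, ∑ a ∈ univ.filter (fun a' => pap a' = p), (y a - f (pap a)) ^ 2 =
      ∑ a ∈ univ.filter (fun a' => pap a' = p), (y a - f p) ^ 2 :=
    fun f => sum_congr rfl fun a ha => by rw [(mem_filter.mp ha).2]
  rw [hfiber, hfiber]
  exact sum_sq_sub_mean_le _ y (x p)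

theorem sum_log_gaussian_density {ι : Type*} [Fintype ι] {σ : ℝ} (hσ : σ ≠ 0) (u : ι → ℝ) :
    ∑ i, Real.log ((1 / (σ * Real.sqrt (2 * Real.pi))) * Real.exp (-u i ^ 2 / (2 * σ ^ 2))) =
      Fintype.card ι * Real.log (1 / (σ * Real.sqrt (2 * Real.pi))) -
        (∑ i, u i ^ 2) / (2 * σ ^ 2) := by
  have hc : 1 / (σ * Real.sqrt (2 * Real.pi)) ≠ 0 := by
    have : Real.sqrt (2 * Real.pi) ≠ 0 := (Real.sqrt_pos.mpr (by positivity)).ne'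
    positivity
  simp only [Real.log_mul hc (Real.exp_ne_zero _), Real.log_exp, sum_add_distrib, sum_const,
    card_univ, nsmul_eq_mul, neg_div, sum_neg_distrib, sum_div, sub_eq_add_neg]

theorem ciSup_sub_div_eq_of_isMin {X : Type*} {f : X → ℝ} {x₀ : X} (hx₀ : ∀ x, f x₀ ≤ f x)
    (K : ℝ) {d : ℝ} (hd : 0 < d) :
    ⨆ x, (K - f x / d) = K - f x₀ / d :=
  haveI : Nonempty X := ⟨x₀⟩
  ciSup_eq_of_forall_le_of_forall_lt_exists_gt
    (fun x => sub_le_sub_left (div_le_div_of_nonneg_right (hx₀ x) hd.le) K)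
    fun _ hw => ⟨x₀, hw⟩

theorem stmt_16_general {A P : Type*} [Fintype A] [DecidableEq P]
    (σ : ℝ) (hσ : 0 < σ)
    (pap : A → P)
    (C : (A → ℝ) → ℝ)
    (hC : ∀ y : A → ℝ,
      C y = ∑ a, (y a -
        (∑ a' ∈ Finset.univ.filter (fun a' => pap a' = pap a), y a') /
          ((Finset.univ.filter (fun a' => pap a' = pap a)).card : ℝ)) ^ 2)
    (B : Set (A → ℝ))
    (L : (A → ℝ) → (P → ℝ) → ℝ)
    (hL : ∀ (y : A → ℝ) (x : P → ℝ),
      L y x = ∑ a, Real.log ((1 / (σ * Real.sqrt (2 * Real.pi))) *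
        Real.exp (-(y a - x (pap a)) ^ 2 / (2 * σ ^ 2))))
    (M : (A → ℝ) → ℝ)
    (hM : ∀ y : A → ℝ, M y = ⨆ x : P → ℝ, L y x)
    (ystar : A → ℝ) :
    (∀ y ∈ B, C ystar ≤ C y) ↔ (∀ y ∈ B, M y ≤ M ystar) := by
  have h2σ : 0 < 2 * σ ^ 2 := by positivity
  have hMC : ∀ y, M y = Fintype.card A * Real.log (1 / (σ * Real.sqrt (2 * Real.pi))) -
      C y / (2 * σ ^ 2) := fun y => by
    simp only [hM, hL, sum_log_gaussian_density hσ.ne']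
    rw [ciSup_sub_div_eq_of_isMin (sum_sq_sub_fiberMean_le pap y) _ h2σ, hC]
    rfl
  exact forall₂_congr fun y _ => by
    rw [hMC, hMC, sub_le_sub_iff_left, div_le_div_iff_of_pos_right h2σ]

/-- Proposition 3: over the quantization box `B`, a point `y*` minimizes the consensus
objective `C` if and only if it maximizes the profile log-likelihood
`M(y) = sup_x L(y, x)` of the Thurstone model with quantization. -/
theorem stmt_16 {A P : Type*} [Fintype A] [Nonempty A] [Fintype P] [DecidableEq P]
    (σ : ℝ) (hσ : 0 < σ)
    (pap : A → P) (hsurj : ∀ p : P, ∃ a : A, pap a = p)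
    (C : (A → ℝ) → ℝ)
    (hC : ∀ y : A → ℝ,
      C y = ∑ a, (y a -
        (∑ a' ∈ Finset.univ.filter (fun a' => pap a' = pap a), y a') /
          ((Finset.univ.filter (fun a' => pap a' = pap a)).card : ℝ)) ^ 2)
    (z : A → ℝ)
    (B : Set (A → ℝ))
    (hB : B = {y : A → ℝ | ∀ a, z a - 1/2 ≤ y a ∧ y a ≤ z a + 1/2})
    (L : (A → ℝ) → (P → ℝ) → ℝ)
    (hL : ∀ (y : A → ℝ) (x : P → ℝ),
      L y x = ∑ a, Real.log ((1 / (σ * Real.sqrt (2 * Real.pi))) *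
        Real.exp (-(y a - x (pap a)) ^ 2 / (2 * σ ^ 2))))
    (M : (A → ℝ) → ℝ)
    (hM : ∀ y : A → ℝ, M y = ⨆ x : P → ℝ, L y x)
    (ystar : A → ℝ) (hystar : ystar ∈ B) :
    (∀ y ∈ B, C ystar ≤ C y) ↔ (∀ y ∈ B, M y ≤ M ystar) :=
  stmt_16_general σ hσ pap C hC B L hL M hM ystar
end
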